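/- Predictable deadlocks under an MHB partial order are predictable deadlocks under the trace-based lock set: if <_P satisfies the must-happen-before criterion, then every predictable deadlock {q_1, …, q_n} induced by LH_P is a predictable deadlock induced by LH_all (the deadlock pattern conditions DP-Cycle and DP-Guard hold for LH_all and the same witness applies). -/

import Mathlib

inductive Op where
  | read : ℕ → Op
  | write : ℕ → Op
  | req : ℕ → Op
  | acq : ℕ → Op
  | rel : ℕ → Op
deriving DecidableEq

structure Event where
  id : ℕ
  thd : ℕ
  op : Op
deriving DecidableEq

/-- Trace order: `e` occurs strictly before `f` in trace `T`. -/
def TrLt (T : List Event) (e f : Event) : Prop :=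
  e ∈ T ∧ f ∈ T ∧ T.idxOf e < T.idxOf f

def IsAcq (e : Event) (l : ℕ) : Prop := e.op = Op.acq l
def IsRel (e : Event) (l : ℕ) : Prop := e.op = Op.rel l
def IsRead (e : Event) (x : ℕ) : Prop := e.op = Op.read x
def IsWrite (e : Event) (x : ℕ) : Prop := e.op = Op.write x
def IsReq (e : Event) (l : ℕ) : Prop := e.op = Op.req l

/-- `r` is the matching release of acquire `a` in `T`. -/
def Matches (T : List Event) (a r : Event) : Prop :=
  ∃ l, IsAcq a l ∧ IsRel r l ∧ a.thd = r.thd ∧ TrLt T a r ∧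
    ∀ r' ∈ T, IsRel r' l → ¬ (TrLt T a r' ∧ TrLt T r' r)

/-- Well-formedness of a trace. -/
structure WF (T : List Event) : Prop where
  nodup : T.Nodup
  wfAcq : ∀ a a' l, a ∈ T → a' ∈ T → IsAcq a l → IsAcq a' l → TrLt T a a' →
    ∃ r ∈ T, IsRel r l ∧ r.thd = a.thd ∧ TrLt T a r ∧ TrLt T r a'
  wfRel : ∀ r l, r ∈ T → IsRel r l →
    ∃ a ∈ T, IsAcq a l ∧ a.thd = r.thd ∧ TrLt T a r ∧
      ∀ r' ∈ T, IsRel r' l → ¬ (TrLt T a r' ∧ TrLt T r' r)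
  wfReqBefore : ∀ a l, a ∈ T → IsAcq a l →
    ∃ q ∈ T, IsReq q l ∧ q.thd = a.thd ∧ TrLt T q a ∧
      ∀ f ∈ T, f.thd = a.thd → ¬ (TrLt T q f ∧ TrLt T f a)
  wfReqAfter : ∀ q l e, q ∈ T → IsReq q l → e ∈ T → e.thd = q.thd → TrLt T q e →
    (∀ f ∈ T, f.thd = q.thd → ¬ (TrLt T q f ∧ TrLt T f e)) → IsAcq e l

/-- Projection of a trace onto a thread. -/
def projT (T : List Event) (t : ℕ) : List Event := T.filter (fun e => e.thd = t)

/-- `w` is the last write observed by read `e` in `T`. -/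
def LastWrite (T : List Event) (w e : Event) : Prop :=
  ∃ x, IsRead e x ∧ IsWrite w x ∧ TrLt T w e ∧
    ∀ w' ∈ T, IsWrite w' x → ¬ (TrLt T w w' ∧ TrLt T w' e)

/-- `T'` is a correctly reordered prefix of `T`. -/
def CRP (T T' : List Event) : Prop :=
  WF T' ∧ (∀ e ∈ T', e ∈ T) ∧
  (∀ t, (projT T' t) <+: (projT T t)) ∧
  (∀ e w, e ∈ T' → LastWrite T w e → LastWrite T' w e)

/-- `e` must precede `f` under all correctly reordered prefixes. -/
def MustPrecede (T : List Event) (e f : Event) : Prop :=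
  ∀ T', CRP T T' → f ∈ T' → e ∈ T' ∧ TrLt T' e f

/-- Thread order. -/
def ThreadLt (T : List Event) (e f : Event) : Prop :=
  e.thd = f.thd ∧ TrLt T e f

/-- Last-write order: smallest transitive relation containing thread order
and last-write dependencies. -/
inductive LWOrder (T : List Event) : Event → Event → Prop
  | to : ∀ e f, ThreadLt T e f → LWOrder T e f
  | lw : ∀ w e, LastWrite T w e → LWOrder T w e
  | trans : ∀ e f g, LWOrder T e f → LWOrder T f g → LWOrder T e g

/-- `e` is inside the thread-order critical section of acquire `a` with
matching release `r`. -/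
def InCSto (T : List Event) (a r e : Event) : Prop :=
  Matches T a r ∧ ThreadLt T a e ∧ ThreadLt T e r

/-- Release order. -/
inductive ROOrder (T : List Event) : Event → Event → Prop
  | lw : ∀ e f, LWOrder T e f → ROOrder T e f
  | rel : ∀ a r a' r' e f l, Matches T a r → Matches T a' r' → a ≠ a' →
      IsAcq a l → IsAcq a' l → InCSto T a r e → InCSto T a' r' f →
      LWOrder T e f → ROOrder T r f
  | trans : ∀ e f g, ROOrder T e f → ROOrder T f g → ROOrder T e g

/-- CS-Match: no other release on `l` in thread of `a` can come between `a`
and `e` in any correctly reordered prefix. -/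
def CSMatch (T : List Event) (a e : Event) (l : ℕ) : Prop :=
  ¬ ∃ r' T', r' ∈ T ∧ IsRel r' l ∧ r'.thd = a.thd ∧ CRP T T' ∧
    TrLt T' a r' ∧ TrLt T' r' e

/-- Trace-based critical section membership. -/
def InCSAll (T : List Event) (a r e : Event) : Prop :=
  ∃ l, IsAcq a l ∧ IsRel r l ∧ a.thd = r.thd ∧ a ∈ T ∧ r ∈ T ∧
    MustPrecede T a e ∧ MustPrecede T e r ∧ CSMatch T a e l

/-- Partial-order-based critical section membership. -/
def InCSP (T : List Event) (P : Event → Event → Prop) (a r e : Event) : Prop :=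
  ∃ l, IsAcq a l ∧ IsRel r l ∧ a.thd = r.thd ∧ a ∈ T ∧ r ∈ T ∧
    P a e ∧ P e r ∧ CSMatch T a e l

/-- Trace-based lock set. -/
def LHAll (T : List Event) (e : Event) : Set (ℕ × ℕ) :=
  { p | ∃ a r, IsAcq a p.1 ∧ a.thd = p.2 ∧ InCSAll T a r e }

/-- Partial-order-based lock set. -/
def LHP (T : List Event) (P : Event → Event → Prop) (e : Event) : Set (ℕ × ℕ) :=
  { p | ∃ a r, IsAcq a p.1 ∧ a.thd = p.2 ∧ InCSP T P a r e }

/-- Guard intersection: common locks held by distinct threads. -/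
def HatInter (M N : Set (ℕ × ℕ)) : Set ℕ :=
  { l | ∃ s t, (l, s) ∈ M ∧ (l, t) ∈ N ∧ s ≠ t }

/-- `e` is final in `T'`: no later event of the same thread. -/
def Final (T' : List Event) (e : Event) : Prop :=
  e ∈ T' ∧ ∀ f ∈ T', f.thd = e.thd → ¬ TrLt T' e f

/-- `a` is the acquire fulfilling request `q` in `T`. -/
def Fulfills (T : List Event) (q a : Event) : Prop :=
  ∃ l, IsReq q l ∧ IsAcq a l ∧ a.thd = q.thd ∧ TrLt T q a ∧
    ∀ f ∈ T, f.thd = q.thd → ¬ (TrLt T q f ∧ TrLt T f a)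

/-- `T'` is sync preserving w.r.t. `T`. -/
def SyncPreserving (T T' : List Event) : Prop :=
  ∀ a a' l, a ∈ T' → a' ∈ T' → IsAcq a l → IsAcq a' l → a ≠ a' →
    (TrLt T' a a' ↔ TrLt T a a')

/-- Sync-preserving closure of a set of events. -/
inductive SPClosure (T : List Event) (S : Set Event) : Event → Prop
  | base : ∀ e, e ∈ S → SPClosure T S e
  | lwc : ∀ e f, LWOrder T e f → SPClosure T S f → SPClosure T S e
  | spc : ∀ a a' r l, IsAcq a l → IsAcq a' l → a ≠ a' → TrLt T a a' →
      Matches T a r → SPClosure T S a' → SPClosure T S r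


/-! ### Auxiliary lemmas -/

lemma acq_ne_req {x y : Event} {l m : ℕ} (hx : IsAcq x l) (hy : IsReq y m) : x ≠ y := by
  intro h; subst h
  have h1 : x.op = Op.acq l := hx
  have h2 : x.op = Op.req m := hy
  rw [h1] at h2; exact Op.noConfusion h2

lemma rel_ne_req {x y : Event} {l m : ℕ} (hx : IsRel x l) (hy : IsReq y m) : x ≠ y := by
  intro h; subst h
  have h1 : x.op = Op.rel l := hx
  have h2 : x.op = Op.req m := hy
  rw [h1] at h2; exact Op.noConfusion h2

lemma read_ne_req {x y : Event} {l m : ℕ} (hx : IsRead x l) (hy : IsReq y m) : x ≠ y := by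
  intro h; subst h
  have h1 : x.op = Op.read l := hx
  have h2 : x.op = Op.req m := hy
  rw [h1] at h2; exact Op.noConfusion h2

lemma write_ne_req {x y : Event} {l m : ℕ} (hx : IsWrite x l) (hy : IsReq y m) : x ≠ y := by
  intro h; subst h
  have h1 : x.op = Op.write l := hx
  have h2 : x.op = Op.req m := hy
  rw [h1] at h2; exact Op.noConfusion h2

lemma trlt_total {T : List Event} (hnd : T.Nodup) {x y : Event}
    (hx : x ∈ T) (hy : y ∈ T) (hne : x ≠ y) : TrLt T x y ∨ TrLt T y x := by
  rcases Nat.lt_trichotomy (T.idxOf x) (T.idxOf y) with h | h | h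
  · exact Or.inl ⟨hx, hy, h⟩
  · exact absurd ((List.idxOf_inj hx).1 h) hne
  · exact Or.inr ⟨hy, hx, h⟩

/-- Moving a final request to the very end of a correctly reordered prefix
yields again a correctly reordered prefix. -/
lemma crp_move (T T' : List Event) (e : Event) (l0 : ℕ)
    (hcrp : CRP T T') (hfin : Final T' e) (hereq : IsReq e l0) :
    ∃ M : List Event, CRP T M ∧ (∀ x, x ∈ M ↔ x ∈ T') ∧
      (∀ x y, x ≠ e → y ≠ e → (TrLt T' x y ↔ TrLt M x y)) ∧
      (∀ x, x ∈ T' → x ≠ e → TrLt M x e) ∧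
      (∀ y, ¬ TrLt M e y) := by
  classical
  obtain ⟨hWF, hsub, hproj, hlwp⟩ := hcrp
  obtain ⟨A, B, hsplit⟩ := List.append_of_mem hfin.1
  subst hsplit
  set T' : List Event := A ++ e :: B with hT'
  have hnd : T'.Nodup := hWF.nodup
  obtain ⟨hA, hconsB, hdisj0⟩ := List.nodup_append.1 hnd
  obtain ⟨heB, hB⟩ := List.nodup_cons.1 hconsB
  have heA : e ∉ A := fun h => hdisj0 e h e List.mem_cons_self rfl
  have hdisj : ∀ ⦃x⦄, x ∈ A → x ∈ B → False :=
    fun x hxa hxb => hdisj0 x hxa x (List.mem_cons_of_mem _ hxb) rfl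
  refine ⟨(A ++ B) ++ [e], ?_⟩
  set M : List Event := (A ++ B) ++ [e] with hM
  have heAB : e ∉ A ++ B := by
    intro h; rcases List.mem_append.1 h with h | h
    exacts [heA h, heB h]
  have memM : ∀ x, x ∈ M ↔ x ∈ T' := by
    intro x
    simp only [hM, hT', List.mem_append, List.mem_cons, List.mem_singleton]
    tauto
  have heM : e ∈ M := by simp [hM]
  have heT' : e ∈ T' := by simp [hT']
  have memcase : ∀ x, x ∈ T' → x ≠ e → x ∈ A ∨ x ∈ B := by
    intro x hx hxe
    rcases List.mem_append.1 hx with h | h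
    · exact Or.inl h
    · rcases List.mem_cons.1 h with h | h
      · exact absurd h hxe
      · exact Or.inr h
  have idx_e_T' : T'.idxOf e = A.length := by
    rw [hT', List.idxOf_append_of_notMem heA, List.idxOf_cons_self]
    omega
  have idx_e_M : M.idxOf e = A.length + B.length := by
    rw [hM, List.idxOf_append_of_notMem heAB, List.idxOf_cons_self,
      List.length_append]
    omega
  have idxA_T' : ∀ x ∈ A, T'.idxOf x = A.idxOf x :=
    fun x hx => List.idxOf_append_of_mem hx
  have idxA_M : ∀ x ∈ A, M.idxOf x = A.idxOf x := by
    intro x hx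
    rw [hM, List.idxOf_append_of_mem (List.mem_append.2 (Or.inl hx)),
      List.idxOf_append_of_mem hx]
  have idxB_T' : ∀ x ∈ B, T'.idxOf x = A.length + 1 + B.idxOf x := by
    intro x hx
    have hxA : x ∉ A := fun h => hdisj h hx
    have hxe : e ≠ x := fun h => heB (h ▸ hx)
    rw [hT', List.idxOf_append_of_notMem hxA, List.idxOf_cons_ne _ hxe]
    omega
  have idxB_M : ∀ x ∈ B, M.idxOf x = A.length + B.idxOf x := by
    intro x hx
    have hxA : x ∉ A := fun h => hdisj h hx
    rw [hM, List.idxOf_append_of_mem (List.mem_append.2 (Or.inr hx)),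
      List.idxOf_append_of_notMem hxA]
  have key : ∀ x, x ∈ T' → x ≠ e →
      (T'.idxOf x = A.idxOf x ∧ M.idxOf x = A.idxOf x ∧
        A.idxOf x < A.length) ∨
      (T'.idxOf x = A.length + 1 + B.idxOf x ∧
        M.idxOf x = A.length + B.idxOf x ∧ B.idxOf x < B.length) := by
    intro x hx hxe
    rcases memcase x hx hxe with h | h
    · exact Or.inl ⟨idxA_T' x h, idxA_M x h, List.idxOf_lt_length_iff.2 h⟩
    · exact Or.inr ⟨idxB_T' x h, idxB_M x h, List.idxOf_lt_length_iff.2 h⟩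
  have tiff : ∀ x y, x ≠ e → y ≠ e → (TrLt T' x y ↔ TrLt M x y) := by
    intro x y hxe hye
    constructor
    · rintro ⟨hx, hy, hlt⟩
      refine ⟨(memM x).2 hx, (memM y).2 hy, ?_⟩
      rcases key x hx hxe with ⟨e1, e2, e3⟩ | ⟨e1, e2, e3⟩ <;>
        rcases key y hy hye with ⟨f1, f2, f3⟩ | ⟨f1, f2, f3⟩ <;> omega
    · rintro ⟨hx, hy, hlt⟩
      have hx' := (memM x).1 hx
      have hy' := (memM y).1 hy
      refine ⟨hx', hy', ?_⟩
      rcases key x hx' hxe with ⟨e1, e2, e3⟩ | ⟨e1, e2, e3⟩ <;>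
        rcases key y hy' hye with ⟨f1, f2, f3⟩ | ⟨f1, f2, f3⟩ <;> omega
  have tlast : ∀ x, x ∈ T' → x ≠ e → TrLt M x e := by
    intro x hx hxe
    refine ⟨(memM x).2 hx, heM, ?_⟩
    rcases key x hx hxe with ⟨e1, e2, e3⟩ | ⟨e1, e2, e3⟩ <;> omega
  have tmax : ∀ y, ¬ TrLt M e y := by
    rintro y ⟨heM', hyM, hlt⟩
    by_cases hye : y = e
    · subst hye; omega
    · rcases key y ((memM y).1 hyM) hye with ⟨e1, e2, e3⟩ | ⟨e1, e2, e3⟩ <;> omega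
  have hWFM : WF M := by
    refine ⟨?_, ?_, ?_, ?_, ?_⟩
    · refine List.nodup_append.2 ⟨List.nodup_append.2 ⟨hA, hB, fun x hx y hy hxy => hdisj hx (hxy ▸ hy)⟩,
        List.nodup_singleton e, ?_⟩
      intro x hx y hx' hxy
      rw [List.mem_singleton] at hx'
      subst hx'
      exact heAB (hxy ▸ hx)
    · -- wfAcq
      intro a a' l ha ha' hacq hacq' hlt
      have hae : a ≠ e := acq_ne_req hacq hereq
      have ha'e : a' ≠ e := acq_ne_req hacq' hereq
      obtain ⟨r, hr, hrel, hthd, h1, h2⟩ :=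
        hWF.wfAcq a a' l ((memM a).1 ha) ((memM a').1 ha') hacq hacq'
          ((tiff a a' hae ha'e).2 hlt)
      have hre : r ≠ e := rel_ne_req hrel hereq
      exact ⟨r, (memM r).2 hr, hrel, hthd, (tiff a r hae hre).1 h1,
        (tiff r a' hre ha'e).1 h2⟩
    · -- wfRel
      intro r l hr hrel
      have hre : r ≠ e := rel_ne_req hrel hereq
      obtain ⟨a, ha, hacq, hthd, h1, hmin⟩ := hWF.wfRel r l ((memM r).1 hr) hrel
      have hae : a ≠ e := acq_ne_req hacq hereq
      refine ⟨a, (memM a).2 ha, hacq, hthd, (tiff a r hae hre).1 h1, ?_⟩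
      rintro r' hr' hrel' ⟨g1, g2⟩
      have hr'e : r' ≠ e := rel_ne_req hrel' hereq
      exact hmin r' ((memM r').1 hr') hrel'
        ⟨(tiff a r' hae hr'e).2 g1, (tiff r' r hr'e hre).2 g2⟩
    · -- wfReqBefore
      intro a l ha hacq
      have hae : a ≠ e := acq_ne_req hacq hereq
      obtain ⟨q0, hq0, hreq0, hthd0, h1, hmin⟩ :=
        hWF.wfReqBefore a l ((memM a).1 ha) hacq
      have hq0e : q0 ≠ e := by
        intro h; subst h
        exact hfin.2 a ((memM a).1 ha) hthd0.symm h1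
      refine ⟨q0, (memM q0).2 hq0, hreq0, hthd0, (tiff q0 a hq0e hae).1 h1, ?_⟩
      rintro f hf hfthd ⟨g1, g2⟩
      by_cases hfe : f = e
      · exact tmax a (hfe ▸ g2)
      · exact hmin f ((memM f).1 hf) hfthd
          ⟨(tiff q0 f hq0e hfe).2 g1, (tiff f a hfe hae).2 g2⟩
    · -- wfReqAfter
      intro q0 l e0 hq0 hreq0 he0 hthd0 hlt0 hmin0
      by_cases hq0e : q0 = e
      · subst hq0e; exact absurd hlt0 (tmax e0)
      · by_cases he0e : e0 = e
        · exfalso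
          have hq0e' : q0 ≠ e := hq0e
          have hq0T' : q0 ∈ T' := (memM q0).1 hq0
          have hthd0' : e.thd = q0.thd := he0e ▸ hthd0
          have hlt' : TrLt T' q0 e := by
            rcases trlt_total hnd hq0T' heT' hq0e' with h | h
            · exact h
            · exact absurd h (hfin.2 q0 hq0T' hthd0'.symm)
          have hIA : IsAcq e l := by
            refine hWF.wfReqAfter q0 l e hq0T' hreq0 heT' hthd0' hlt' ?_
            rintro f hf hfthd ⟨g1, g2⟩
            by_cases hfe : f = e
            · exact absurd (hfe ▸ g2).2.2 (lt_irrefl _)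
            · refine hmin0 f ((memM f).2 hf) hfthd
                ⟨(tiff q0 f hq0e' hfe).1 g1, he0e ▸ tlast f hf hfe⟩
          have h1 : e.op = Op.acq l := hIA
          have h2 : e.op = Op.req l0 := hereq
          rw [h1] at h2; exact Op.noConfusion h2
        · refine hWF.wfReqAfter q0 l e0 ((memM q0).1 hq0) hreq0 ((memM e0).1 he0)
            hthd0 ((tiff q0 e0 hq0e he0e).2 hlt0) ?_
          rintro f hf hfthd ⟨g1, g2⟩
          by_cases hfe : f = e
          · have he0T' : e0 ∈ T' := (memM e0).1 he0
            have hthd' : e0.thd = f.thd := by rw [hthd0, ← hfthd]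
            exact hfin.2 e0 he0T' (hfe ▸ hthd') (hfe ▸ g2)
          · exact hmin0 f ((memM f).2 hf) hfthd
              ⟨(tiff q0 f hq0e hfe).1 g1, (tiff f e0 hfe he0e).1 g2⟩
  have hprojM : ∀ t0, projT M t0 = projT T' t0 := by
    intro t0
    by_cases ht : e.thd = t0
    · have hBnil : B.filter (fun x => decide (x.thd = t0)) = [] := by
        rw [List.filter_eq_nil_iff]
        intro x hx
        simp only [decide_eq_true_eq]
        intro hxthd
        have hxe : x ≠ e := fun h => heB (h ▸ hx)
        have hxT' : x ∈ T' := by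
          rw [hT']; exact List.mem_append.2 (Or.inr (List.mem_cons_of_mem _ hx))
        have hlt : TrLt T' e x := by
          refine ⟨heT', hxT', ?_⟩
          rw [idx_e_T', idxB_T' x hx]; omega
        exact hfin.2 x hxT' (hxthd.trans ht.symm) hlt
      simp [projT, hM, hT', List.filter_append, List.filter_cons, ht, hBnil]
    · simp [projT, hM, hT', List.filter_append, List.filter_cons, ht]
  refine ⟨⟨hWFM, ?_, ?_, ?_⟩, memM, tiff, tlast, tmax⟩
  · exact fun x hx => hsub x ((memM x).1 hx)
  · intro t0; rw [hprojM t0]; exact hproj t0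
  · intro e0 w he0 hlw
    have he0T' : e0 ∈ T' := (memM e0).1 he0
    obtain ⟨x, hread, hwrite, hlt, hmin⟩ := hlwp e0 w he0T' hlw
    have he0e : e0 ≠ e := read_ne_req hread hereq
    have hwe : w ≠ e := write_ne_req hwrite hereq
    refine ⟨x, hread, hwrite, (tiff w e0 hwe he0e).1 hlt, ?_⟩
    rintro w' hw' hwrite' ⟨g1, g2⟩
    have hw'e : w' ≠ e := write_ne_req hwrite' hereq
    exact hmin w' ((memM w').1 hw') hwrite'
      ⟨(tiff w w' hwe hw'e).2 g1, (tiff w' e0 hw'e he0e).2 g2⟩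

theorem pd_mhb (T : List Event) (P : Event → Event → Prop)
    (hmhb : ∀ e f, P e f → MustPrecede T e f)
    (n : ℕ) [NeZero n] (q : Fin n → Event) (lv : Fin n → ℕ)
    (hreq : ∀ i, IsReq (q i) (lv i))
    (hthd : ∀ i j, i ≠ j → (q i).thd ≠ (q j).thd)
    (hcyc : ∀ i, ∃ t, (lv i, t) ∈ LHP T P (q (i + 1)))
    (hguard : ∀ i j, i ≠ j → HatInter (LHP T P (q i)) (LHP T P (q j)) = ∅)
    (T' : List Event) (hcrp : CRP T T') (hfin : ∀ i, Final T' (q i)) :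
    (∀ i, ∃ t, (lv i, t) ∈ LHAll T (q (i + 1))) ∧
    (∀ i j, i ≠ j → HatInter (LHAll T (q i)) (LHAll T (q j)) = ∅) ∧
    CRP T T' ∧ (∀ i, Final T' (q i)) := by
  refine ⟨?_, ?_, hcrp, hfin⟩
  · intro i
    obtain ⟨t, a, r, h1, h2, l', c1, c2, c3, c4, c5, c6, c7, c8⟩ := hcyc i
    exact ⟨t, a, r, h1, h2, l', c1, c2, c3, c4, c5, hmhb _ _ c6, hmhb _ _ c7, c8⟩
  · intro i j hij
    rw [Set.eq_empty_iff_forall_notMem]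
    rintro l ⟨s, t, hi, hj, hst⟩
    obtain ⟨a, r, hacqa, hthda, la, c1, c2, c3, c4, c5, c6, c7, c8⟩ := hi
    obtain ⟨a', r', hacqa', hthda', lb, d1, d2, d3, d4, d5, d6, d7, d8⟩ := hj
    have hla : la = l := by
      have h1 : a.op = Op.acq la := c1
      have h2 : a.op = Op.acq l := hacqa
      rw [h1] at h2; exact Op.acq.inj h2
    have hlb : lb = l := by
      have h1 : a'.op = Op.acq lb := d1
      have h2 : a'.op = Op.acq l := hacqa'
      rw [h1] at h2; exact Op.acq.inj h2
    subst la; subst lb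
    have hane : a ≠ a' := by
      intro h
      exact hst (hthda.symm.trans (h ▸ hthda'))
    have hqiT' : q i ∈ T' := (hfin i).1
    have hqjT' : q j ∈ T' := (hfin j).1
    obtain ⟨haT', hltaqi⟩ := c6 T' hcrp hqiT'
    obtain ⟨ha'T', hlta'qj⟩ := d6 T' hcrp hqjT'
    rcases trlt_total hcrp.1.nodup haT' ha'T' hane with h | h
    · obtain ⟨ρ, hρ, hρrel, hρthd, g1, g2⟩ :=
        hcrp.1.wfAcq a a' l haT' ha'T' hacqa hacqa' h
      obtain ⟨M, hMcrp, memM, tiff, tlast, -⟩ :=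
        crp_move T T' (q i) (lv i) hcrp (hfin i) (hreq i)
      refine c8 ⟨ρ, M, hcrp.2.1 ρ hρ, hρrel, hρthd, hMcrp, ?_, ?_⟩
      · exact (tiff a ρ (acq_ne_req hacqa (hreq i)) (rel_ne_req hρrel (hreq i))).1 g1
      · exact tlast ρ hρ (rel_ne_req hρrel (hreq i))
    · obtain ⟨ρ, hρ, hρrel, hρthd, g1, g2⟩ :=
        hcrp.1.wfAcq a' a l ha'T' haT' hacqa' hacqa h
      obtain ⟨M, hMcrp, memM, tiff, tlast, -⟩ :=
        crp_move T T' (q j) (lv j) hcrp (hfin j) (hreq j)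
      refine d8 ⟨ρ, M, hcrp.2.1 ρ hρ, hρrel, hρthd, hMcrp, ?_, ?_⟩
      · exact (tiff a' ρ (acq_ne_req hacqa' (hreq j)) (rel_ne_req hρrel (hreq j))).1 g1
      · exact tlast ρ hρ (rel_ne_req hρrel (hreq j))
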